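/- One-dimensional Caffarelli contraction: let μ be a probability measure on ℝ with density f(x) = e^{−x²/2 − V(x)} where V is convex. Then the monotone transport map T: ℝ → ℝ defined by μ((−∞, T(x)]) = γ₁((−∞, x]) for all x is a 1-Lipschitz contraction: |T(x) − T(y)| ≤ |x − y| for all x, y ∈ ℝ. -/

import Mathlib

open MeasureTheory Real

/-- `f` has the form `f x = e^{-x²/2 - V x}` with `V : ℝ → ℝ ∪ {∞}` convex; equivalently,
`x ↦ f x · e^{x²/2}` is log-concave (the density is more log-concave than the Gaussian). -/
def RelLogConcave (f : ℝ → ℝ) : Prop :=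
  ∀ x y a b : ℝ, 0 ≤ a → 0 ≤ b → a + b = 1 →
    (f x * Real.exp (x ^ 2 / 2)) ^ a * (f y * Real.exp (y ^ 2 / 2)) ^ b ≤
      f (a * x + b * y) * Real.exp ((a * x + b * y) ^ 2 / 2)

/-!
Write `f = h · e^{-x²/2}` with `h` log-concave and fix `x ≤ y`, `a = T x < b = T y`. The secant of
`log h` through `a` and `b` produces a shifted Gaussian `c · γ(· - κ)` lying above `f` off `[a, b]`
and below it on `[a, b]`. Integrating, the masses `Φ x`, `Φ y - Φ x`, `1 - Φ y` that `f` gives to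
`(-∞, a]`, `[a, b]`, `[b, ∞)` are compared with the Gaussian masses of `(-∞, a - κ]`,
`[a - κ, b - κ]`, `[b - κ, ∞)`; log-concavity of the Gaussian CDF `Φ` and of its tail `1 - Φ`
then forces `b - a ≤ y - x`.
-/

open Set ProbabilityTheory

def IsLogConcave (h : ℝ → ℝ) : Prop :=
  ∀ x y a b : ℝ, 0 ≤ a → 0 ≤ b → a + b = 1 → h x ^ a * h y ^ b ≤ h (a * x + b * y)

namespace IsLogConcave

variable {h : ℝ → ℝ} (hh : IsLogConcave h)
include hh

theorem convex_setOf_pos : Convex ℝ {x | 0 < h x} := fun x hx y hy a b ha hb hab =>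
  (mul_pos (rpow_pos_of_pos hx a) (rpow_pos_of_pos hy b)).trans_le (hh x y a b ha hb hab)

theorem concaveOn_log : ConcaveOn ℝ {x | 0 < h x} (fun x => log (h x)) := by
  refine ⟨hh.convex_setOf_pos, fun x hx y hy a b ha hb hab => ?_⟩
  have hx' : 0 < h x := hx
  have hy' : 0 < h y := hy
  calc a • log (h x) + b • log (h y) = log (h x ^ a * h y ^ b) := by
        rw [log_mul (rpow_pos_of_pos hx' a).ne' (rpow_pos_of_pos hy' b).ne', log_rpow hx',
          log_rpow hy', smul_eq_mul, smul_eq_mul]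
    _ ≤ log (h (a * x + b * y)) :=
        log_le_log (mul_pos (rpow_pos_of_pos hx' a) (rpow_pos_of_pos hy' b))
          (hh x y a b ha hb hab)

end IsLogConcave

namespace ConcaveOn

variable {s : Set ℝ} {φ : ℝ → ℝ} {a b t : ℝ} (hφ : ConcaveOn ℝ s φ)
include hφ

theorem le_secant_of_le_left (ht : t ∈ s) (hb : b ∈ s) (hta : t ≤ a) (hab : a < b) :
    φ t ≤ φ a + (φ b - φ a) / (b - a) * (t - a) := by
  rcases hta.eq_or_lt with rfl | hta
  · simp
  have h := hφ.slope_anti_adjacent ht hb hta hab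
  rw [le_div_iff₀ (sub_pos.2 hta)] at h
  linarith

theorem le_secant_of_right_le (ha : a ∈ s) (ht : t ∈ s) (hab : a < b) (hbt : b ≤ t) :
    φ t ≤ φ a + (φ b - φ a) / (b - a) * (t - a) := by
  have hb : φ b = φ a + (φ b - φ a) / (b - a) * (b - a) := by
    rw [div_mul_cancel₀ _ (sub_pos.2 hab).ne']; ring
  rcases hbt.eq_or_lt with rfl | hbt
  · exact hb.le
  have h := hφ.slope_anti_adjacent ha ht hab hbt
  rw [div_le_iff₀ (sub_pos.2 hbt)] at h
  linarith

theorem secant_le_of_mem_Icc (ha : a ∈ s) (hb : b ∈ s) (ht : t ∈ Icc a b) :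
    φ a + (φ b - φ a) / (b - a) * (t - a) ≤ φ t := by
  rcases ht.1.eq_or_lt with rfl | hat
  · simp
  have hab := hat.trans_le ht.2
  have h := hφ.neg.secant_mono ha (hφ.1.ordConnected.out ha hb ht) hb hat.ne' hab.ne' ht.2
  simp only [Pi.neg_apply, neg_sub_neg] at h
  rw [div_le_div_iff₀ (sub_pos.2 hat) (sub_pos.2 hab)] at h
  rw [div_mul_eq_mul_div, ← le_sub_iff_add_le', div_le_iff₀ (sub_pos.2 hab)]
  linarith

end ConcaveOn

noncomputable def gaussCDF (x : ℝ) : ℝ := ∫ t in Iic x, gaussianPDFReal 0 1 t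

noncomputable def gaussTail (x : ℝ) : ℝ := ∫ t in Ioi x, gaussianPDFReal 0 1 t

lemma gaussianPDFReal_zero_one (t : ℝ) :
    gaussianPDFReal 0 1 t = (√(2 * π))⁻¹ * exp (-t ^ 2 / 2) := by
  simp [gaussianPDFReal]

lemma setIntegral_Iic_gaussianPDFReal (κ s : ℝ) :
    ∫ t in Iic s, gaussianPDFReal κ 1 t = gaussCDF (s - κ) := by
  have h := (measurePreserving_sub_right volume κ).setIntegral_preimage_emb
    (measurableEmbedding_subRight κ) (gaussianPDFReal 0 1) (Iic (s - κ))
  simpa [preimage_sub_const_Iic, gaussianPDFReal_sub, gaussCDF] using h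

lemma setIntegral_Ioi_gaussianPDFReal (κ s : ℝ) :
    ∫ t in Ioi s, gaussianPDFReal κ 1 t = gaussTail (s - κ) := by
  have h := (measurePreserving_sub_right volume κ).setIntegral_preimage_emb
    (measurableEmbedding_subRight κ) (gaussianPDFReal 0 1) (Ioi (s - κ))
  simpa [preimage_sub_const_Ioi, gaussianPDFReal_sub, gaussTail] using h

lemma gaussCDF_add_gaussTail (x : ℝ) : gaussCDF x + gaussTail x = 1 := by
  rw [gaussCDF, gaussTail, intervalIntegral.integral_Iic_add_Ioi
    (integrable_gaussianPDFReal 0 1).integrableOn (integrable_gaussianPDFReal 0 1).integrableOn,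
    integral_gaussianPDFReal_eq_one 0 one_ne_zero]

lemma setIntegral_gaussianPDFReal_pos {s : Set ℝ} (h : volume s ≠ 0) :
    0 < ∫ t in s, gaussianPDFReal 0 1 t := by
  rw [setIntegral_pos_iff_support_of_nonneg_ae (ae_of_all _ (gaussianPDFReal_nonneg 0 1))
    (integrable_gaussianPDFReal 0 1).integrableOn,
    Function.support_eq_univ fun t => (gaussianPDFReal_pos 0 1 t one_ne_zero).ne', univ_inter]
  exact pos_iff_ne_zero.2 h

lemma gaussCDF_pos (x : ℝ) : 0 < gaussCDF x :=
  setIntegral_gaussianPDFReal_pos (by simp)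

lemma gaussTail_pos (x : ℝ) : 0 < gaussTail x :=
  setIntegral_gaussianPDFReal_pos (by simp)

lemma gaussCDF_strictMono : StrictMono gaussCDF := by
  intro x y hxy
  have h := intervalIntegral.integral_Iic_sub_Iic (a := x) (b := y)
    (integrable_gaussianPDFReal 0 1).integrableOn (integrable_gaussianPDFReal 0 1).integrableOn
  rw [intervalIntegral.integral_of_le hxy.le] at h
  have := setIntegral_gaussianPDFReal_pos (s := Ioc x y) (by simpa using hxy)
  rw [gaussCDF, gaussCDF]
  linarith

lemma gaussTail_eq_one_sub (x : ℝ) : gaussTail x = 1 - gaussCDF x := by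
  linarith [gaussCDF_add_gaussTail x]

lemma gaussTail_strictAnti : StrictAnti gaussTail := fun x y hxy => by
  simpa [gaussTail_eq_one_sub] using gaussCDF_strictMono hxy

lemma gaussCDF_eq_gaussTail_neg (x : ℝ) : gaussCDF x = gaussTail (-x) := by
  rw [gaussTail, ← integral_comp_neg_Iic]
  simp [gaussCDF, gaussianPDFReal]

lemma hasDerivAt_gaussCDF (x : ℝ) : HasDerivAt gaussCDF (gaussianPDFReal 0 1 x) x := by
  have h : gaussCDF = fun u => gaussCDF 0 + ∫ t in (0 : ℝ)..u, gaussianPDFReal 0 1 t := by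
    ext u
    rw [← intervalIntegral.integral_Iic_sub_Iic (integrable_gaussianPDFReal 0 1).integrableOn
      (integrable_gaussianPDFReal 0 1).integrableOn, gaussCDF, gaussCDF]
    ring
  have hcont : Continuous (gaussianPDFReal 0 1) := by unfold gaussianPDFReal; fun_prop
  rw [h]
  exact (hcont.integral_hasStrictDerivAt 0 x).hasDerivAt.const_add _

lemma hasDerivAt_gaussTail (x : ℝ) : HasDerivAt gaussTail (-gaussianPDFReal 0 1 x) x := by
  simpa [funext gaussTail_eq_one_sub] using (hasDerivAt_gaussCDF x).const_sub 1

lemma gaussianPDFReal_mul_le {s t u : ℝ} (hst : s ≤ t) (hu : 0 ≤ u) :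
    gaussianPDFReal 0 1 s * gaussianPDFReal 0 1 (u + t) ≤
      gaussianPDFReal 0 1 t * gaussianPDFReal 0 1 (u + s) := by
  simp only [gaussianPDFReal_zero_one]
  have h : exp (-s ^ 2 / 2) * exp (-(u + t) ^ 2 / 2) ≤
      exp (-t ^ 2 / 2) * exp (-(u + s) ^ 2 / 2) := by
    rw [← exp_add, ← exp_add, exp_le_exp]
    nlinarith [mul_nonneg hu (sub_nonneg.2 hst)]
  calc _ = (√(2 * π))⁻¹ ^ 2 * (exp (-s ^ 2 / 2) * exp (-(u + t) ^ 2 / 2)) := by ring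
    _ ≤ (√(2 * π))⁻¹ ^ 2 * (exp (-t ^ 2 / 2) * exp (-(u + s) ^ 2 / 2)) := by gcongr
    _ = _ := by ring

lemma gaussTail_eq_integral_Ioi_zero (t : ℝ) :
    gaussTail t = ∫ u in Ioi 0, gaussianPDFReal 0 1 (u + t) := by
  have h := (measurePreserving_add_right volume t).setIntegral_preimage_emb
    (measurableEmbedding_addRight t) (gaussianPDFReal 0 1) (Ioi t)
  simpa [preimage_add_const_Ioi, gaussTail] using h.symm

lemma gaussianPDFReal_mul_gaussTail_le {s t : ℝ} (hst : s ≤ t) :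
    gaussianPDFReal 0 1 s * gaussTail t ≤ gaussianPDFReal 0 1 t * gaussTail s := by
  rw [gaussTail_eq_integral_Ioi_zero, gaussTail_eq_integral_Ioi_zero, ← integral_const_mul,
    ← integral_const_mul]
  refine setIntegral_mono_on ?_ ?_ measurableSet_Ioi fun u hu =>
    gaussianPDFReal_mul_le hst (le_of_lt hu)
  · exact (((integrable_gaussianPDFReal 0 1).comp_add_right t).const_mul _).integrableOn
  · exact (((integrable_gaussianPDFReal 0 1).comp_add_right s).const_mul _).integrableOn

lemma gaussTail_mul_le {s t L : ℝ} (hst : s ≤ t) (hL : 0 ≤ L) :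
    gaussTail s * gaussTail (t + L) ≤ gaussTail t * gaussTail (s + L) := by
  have hR : ∀ u, HasDerivAt (fun v => gaussTail (v + L) / gaussTail v)
      ((-gaussianPDFReal 0 1 (u + L) * gaussTail u - gaussTail (u + L) * -gaussianPDFReal 0 1 u) /
        gaussTail u ^ 2) u := fun u =>
    ((hasDerivAt_gaussTail (u + L)).comp_add_const u L).div (hasDerivAt_gaussTail u)
      (gaussTail_pos u).ne'
  have hanti : Antitone fun v => gaussTail (v + L) / gaussTail v := by
    refine antitone_of_deriv_nonpos (fun u => (hR u).differentiableAt) fun u => ?_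
    rw [(hR u).deriv]
    refine div_nonpos_of_nonpos_of_nonneg ?_ (sq_nonneg _)
    linarith [gaussianPDFReal_mul_gaussTail_le (le_add_of_nonneg_right hL : u ≤ u + L)]
  have h := hanti hst
  rw [div_le_div_iff₀ (gaussTail_pos t) (gaussTail_pos s)] at h
  linarith

lemma gaussCDF_mul_le {s t L : ℝ} (hst : s ≤ t) (hL : 0 ≤ L) :
    gaussCDF t * gaussCDF (s - L) ≤ gaussCDF s * gaussCDF (t - L) := by
  rw [gaussCDF_eq_gaussTail_neg t, gaussCDF_eq_gaussTail_neg s, gaussCDF_eq_gaussTail_neg,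
    gaussCDF_eq_gaussTail_neg, neg_sub, neg_sub, sub_eq_neg_add, sub_eq_neg_add]
  exact gaussTail_mul_le (neg_le_neg hst) hL

theorem sub_le_of_gaussCDF_sandwich {x y a b c : ℝ} (hxy : x ≤ y)
    (hleft : gaussCDF x ≤ c * gaussCDF a) (hright : gaussTail y ≤ c * gaussTail b)
    (hmid : c * (gaussCDF b - gaussCDF a) ≤ gaussCDF y - gaussCDF x) : b - a ≤ y - x := by
  by_contra! hlen
  have hΦab := gaussCDF_strictMono (show a < b by linarith)
  have hQab := gaussTail_strictAnti (show a < b by linarith)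
  have hΦ : gaussCDF x * gaussCDF b ≤ gaussCDF a * gaussCDF y := by
    nlinarith [gaussCDF_pos a]
  have hQ : gaussTail y * gaussTail a ≤ gaussTail x * gaussTail b := by
    have hmid' : c * (gaussTail a - gaussTail b) ≤ gaussTail x - gaussTail y := by
      simpa only [gaussTail_eq_one_sub, sub_sub_sub_cancel_left] using hmid
    nlinarith [gaussTail_pos b]
  -- `x ≤ a` contradicts `hQ`, `b ≤ y` contradicts `hΦ`, and `a < x ≤ y < b` contradicts `hΦ`.
  rcases le_or_gt x a with hxa | hax
  · have h := gaussTail_mul_le hxa (sub_nonneg.2 hxy)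
    have hb := gaussTail_strictAnti (show a + (y - x) < b by linarith)
    rw [add_sub_cancel] at h
    nlinarith [gaussTail_pos x]
  rcases le_or_gt b y with hby | hyb
  · have h := gaussCDF_mul_le hby (sub_nonneg.2 hxy)
    have ha := gaussCDF_strictMono (show a < b - (y - x) by linarith)
    rw [sub_sub_cancel] at h
    nlinarith [gaussCDF_pos y]
  · nlinarith [gaussCDF_strictMono hax, gaussCDF_strictMono hyb, gaussCDF_pos a, gaussCDF_pos y]

lemma exp_affine_sub_half_sq (α κ t : ℝ) :
    exp (α + κ * t - t ^ 2 / 2) = √(2 * π) * exp (α + κ ^ 2 / 2) * gaussianPDFReal κ 1 t := by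
  rw [gaussianPDFReal, NNReal.coe_one, mul_one, mul_one, mul_assoc, mul_left_comm (exp _),
    mul_inv_cancel_left₀ (sqrt_pos.2 (by positivity)).ne', ← exp_add]
  ring_nf

namespace RelLogConcave

variable {f : ℝ → ℝ} (hlc : RelLogConcave f)
include hlc

theorem isLogConcave : IsLogConcave fun x => f x * exp (x ^ 2 / 2) := hlc

theorem convex_setOf_pos : Convex ℝ {x | 0 < f x} := by
  simpa only [mul_pos_iff_of_pos_right (exp_pos _)] using hlc.isLogConcave.convex_setOf_pos

theorem pos_of_setIntegral_Iic_pos_of_setIntegral_Ioi_pos (hf0 : ∀ x, 0 ≤ f x) {m : ℝ}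
    (hl : 0 < ∫ t in Iic m, f t) (hr : 0 < ∫ t in Ioi m, f t) : 0 < f m := by
  obtain ⟨p, hpm, hp⟩ := exists_ne_zero_of_setIntegral_ne_zero hl.ne'
  obtain ⟨q, hmq, hq⟩ := exists_ne_zero_of_setIntegral_ne_zero hr.ne'
  exact hlc.convex_setOf_pos.ordConnected.out ((hf0 p).lt_of_ne' hp) ((hf0 q).lt_of_ne' hq)
    ⟨hpm, le_of_lt hmq⟩

theorem exists_gaussian_secant {a b : ℝ} (hab : a < b) (ha : 0 < f a) (hb : 0 < f b) :
    ∃ κ c : ℝ, (∀ t, t ≤ a ∨ b ≤ t → f t ≤ c * gaussianPDFReal κ 1 t) ∧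
      ∀ t ∈ Icc a b, c * gaussianPDFReal κ 1 t ≤ f t := by
  set φ : ℝ → ℝ := fun x => log (f x * exp (x ^ 2 / 2))
  set κ := (φ b - φ a) / (b - a)
  have hconc := hlc.isLogConcave.concaveOn_log
  have hpos : ∀ {t}, 0 < f t → 0 < f t * exp (t ^ 2 / 2) := fun h => mul_pos h (exp_pos _)
  have hf : ∀ {t}, 0 < f t → f t = exp (φ t - t ^ 2 / 2) := fun h => by
    rw [exp_sub, exp_log (hpos h), mul_div_cancel_right₀ _ (exp_pos _).ne']
  refine ⟨κ, √(2 * π) * exp (φ a - κ * a + κ ^ 2 / 2), fun t ht => ?_, fun t ht => ?_⟩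
  · have hφ : 0 < f t → φ t ≤ φ a + κ * (t - a) := fun hft => ht.elim
      (hconc.le_secant_of_le_left (hpos hft) (hpos hb) · hab)
      (hconc.le_secant_of_right_le (hpos ha) (hpos hft) hab)
    rcases le_or_gt (f t) 0 with hft | hft
    · exact hft.trans (mul_nonneg (by positivity) (gaussianPDFReal_nonneg _ _ _))
    rw [hf hft, ← exp_affine_sub_half_sq, exp_le_exp]
    linarith [hφ hft]
  · have hft : 0 < f t := hlc.convex_setOf_pos.ordConnected.out ha hb ht
    rw [hf hft, ← exp_affine_sub_half_sq, exp_le_exp]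
    linarith [hconc.secant_le_of_mem_Icc (hpos ha) (hpos hb) ht]

end RelLogConcave

theorem transport_sub_le {f T : ℝ → ℝ} (hf0 : ∀ x, 0 ≤ f x) (hlc : RelLogConcave f)
    (hint : ∫ x, f x = 1) (hT : ∀ z, ∫ t in Iic (T z), f t = gaussCDF z) {x y : ℝ}
    (hxy : x ≤ y) : T y - T x ≤ y - x := by
  have hf : Integrable f := Integrable.of_integral_ne_zero (hint ▸ one_ne_zero)
  have hTail : ∀ z, ∫ t in Ioi (T z), f t = gaussTail z := fun z => by
    rw [gaussTail_eq_one_sub, ← hT z, ← hint,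
      ← intervalIntegral.integral_Iic_add_Ioi hf.integrableOn hf.integrableOn, add_sub_cancel_left]
  have hfT : ∀ z, 0 < f (T z) := fun z =>
    hlc.pos_of_setIntegral_Iic_pos_of_setIntegral_Ioi_pos hf0 (hT z ▸ gaussCDF_pos z)
      (hTail z ▸ gaussTail_pos z)
  rcases le_or_gt (T y) (T x) with hba | hab
  · linarith
  obtain ⟨κ, c, hout, hin⟩ := hlc.exists_gaussian_secant hab (hfT x) (hfT y)
  have hg : Integrable fun t => c * gaussianPDFReal κ 1 t :=
    (integrable_gaussianPDFReal κ 1).const_mul c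
  have hleft : gaussCDF x ≤ c * gaussCDF (T x - κ) := by
    rw [← hT x, ← setIntegral_Iic_gaussianPDFReal, ← integral_const_mul]
    exact setIntegral_mono_on hf.integrableOn hg.integrableOn measurableSet_Iic
      fun t ht => hout t (Or.inl ht)
  have hright : gaussTail y ≤ c * gaussTail (T y - κ) := by
    rw [← hTail y, ← setIntegral_Ioi_gaussianPDFReal, ← integral_const_mul]
    exact setIntegral_mono_on hf.integrableOn hg.integrableOn measurableSet_Ioi
      fun t ht => hout t (Or.inr (le_of_lt ht))
  have hmid : c * (gaussCDF (T y - κ) - gaussCDF (T x - κ)) ≤ gaussCDF y - gaussCDF x := by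
    rw [← hT x, ← hT y, ← setIntegral_Iic_gaussianPDFReal, ← setIntegral_Iic_gaussianPDFReal,
      intervalIntegral.integral_Iic_sub_Iic hf.integrableOn hf.integrableOn,
      intervalIntegral.integral_Iic_sub_Iic (integrable_gaussianPDFReal κ 1).integrableOn
        (integrable_gaussianPDFReal κ 1).integrableOn, ← intervalIntegral.integral_const_mul]
    exact intervalIntegral.integral_mono_on hab.le hg.intervalIntegrable hf.intervalIntegrable hin
  linarith [sub_le_of_gaussCDF_sandwich hxy hleft hright hmid]

theorem stmt13 (f : ℝ → ℝ) (hf0 : ∀ x, 0 ≤ f x) (hlc : RelLogConcave f)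
    (hint : ∫ x, f x = 1) (T : ℝ → ℝ) (hmono : Monotone T)
    (hT : ∀ x, ∫ t in Set.Iic (T x), f t =
      ∫ t in Set.Iic x, (Real.sqrt (2 * π))⁻¹ * Real.exp (-t ^ 2 / 2)) :
    LipschitzWith 1 T := by
  have hT' : ∀ z, ∫ t in Iic (T z), f t = gaussCDF z := by
    simpa only [gaussCDF, gaussianPDFReal_zero_one] using hT
  refine LipschitzWith.of_le_add fun x y => ?_
  rcases le_total x y with hxy | hyx
  · linarith [hmono hxy, dist_nonneg (x := x) (y := y)]
  · linarith [transport_sub_le hf0 hlc hint hT' hyx, Real.dist_eq x y, le_abs_self (x - y)]
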